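/- For all integers n, r ≥ 1, every p with 1 ≤ p ≤ r, and an indeterminate z: the sum over partitions μ of n with exactly p parts of (⟨μ, r⟩ / z_μ)(∑_{i≥1} m_i(μ) z^{i-1}) equals ∑_{j=1}^{r} ∑_{i=j}^{n-r+j} (|s(r-j, p-1)| / (i (r-j)!)) C(i, j) C(n-i-1, r-j-1) z^{i-1}. -/

import Mathlib

open Finset

def diagram (l : List ℕ) : Finset (ℕ × ℕ) :=
  (Finset.range l.length).biUnion fun i => (Finset.range (l.getD i 0)).image fun j => (i, j)

def gbc (l : List ℕ) (r : ℕ) : ℕ :=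
  (((diagram l).powersetCard r).filter
    (fun S => ∀ i ∈ Finset.range l.length, ∃ c ∈ S, c.1 = i)).card

lemma mem_diagram (l : List ℕ) (i j : ℕ) :
    (i, j) ∈ diagram l ↔ i < l.length ∧ j < l.getD i 0 := by
  simp only [diagram, Finset.mem_biUnion, Finset.mem_range, Finset.mem_image, Prod.mk.injEq]
  constructor
  · rintro ⟨i', hi', j', hj', rfl, rfl⟩; exact ⟨hi', hj'⟩
  · rintro ⟨h1, h2⟩; exact ⟨i, h1, j, h2, rfl, rfl⟩

lemma diagram_nil : diagram [] = ∅ := by simp [diagram]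

lemma gbc_nil (r : ℕ) : gbc [] r = if r = 0 then 1 else 0 := by
  rcases Nat.eq_zero_or_pos r with h | h
  · subst h; simp [gbc, diagram_nil]
  · simp only [gbc, diagram_nil]
    rw [Finset.powersetCard_eq_empty.2 (by simp; omega), if_neg (by omega)]
    simp

lemma diagram_cons (a : ℕ) (l : List ℕ) :
    diagram (a :: l) = ((Finset.range a).image fun j => ((0, j) : ℕ × ℕ)) ∪
      ((diagram l).image fun c => (c.1 + 1, c.2)) := by
  ext ⟨i, j⟩
  simp only [Finset.mem_union, Finset.mem_image, Finset.mem_range, mem_diagram, Prod.mk.injEq,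
    Prod.exists, List.length_cons]
  constructor
  · rintro ⟨hi, hj⟩
    cases i with
    | zero => left; exact ⟨j, by simpa [List.getD] using hj, rfl, rfl⟩
    | succ k =>
        right
        exact ⟨k, j, ⟨by omega, by simpa [List.getD] using hj⟩, rfl, rfl⟩
  · rintro (⟨j', hj', h1, h2⟩ | ⟨k, j', hk, h1, h2⟩)
    · subst h2; constructor
      · omega
      · simp only [← h1, List.getD]; simpa using hj'
    · subst h1 h2
      refine ⟨by omega, ?_⟩
      simpa [List.getD] using hk.2

lemma gbc_cons (a : ℕ) (l : List ℕ) (r : ℕ) :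
    gbc (a :: l) r = ∑ j ∈ Finset.Icc 1 r, a.choose j * gbc l (r - j) := by
  classical
  set e : ℕ × ℕ → ℕ × ℕ := fun c => (c.1 + 1, c.2) with he
  have einj : Function.Injective e := by
    rintro ⟨x1, x2⟩ ⟨y1, y2⟩ h
    simp only [he, Prod.mk.injEq] at h
    simp [Prod.ext_iff]; omega
  set T₀ : Finset (ℕ × ℕ) := (Finset.range a).image fun j => ((0, j) : ℕ × ℕ) with hT0
  set T₁ : Finset (ℕ × ℕ) := (diagram l).image e with hT1
  have hmem0 : ∀ c ∈ T₀, c.1 = 0 := by rintro ⟨c1, c2⟩ hc; simp [hT0] at hc; omega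
  have hmem1 : ∀ c ∈ T₁, c.1 ≠ 0 := by
    rintro ⟨c1, c2⟩ hc; simp [hT1, he, Prod.ext_iff] at hc; omega
  have hdisj : Disjoint T₀ T₁ := by
    rw [Finset.disjoint_left]
    intro c h0 h1
    exact hmem1 c h1 (hmem0 c h0)
  have hT0card : T₀.card = a := by
    rw [hT0, Finset.card_image_of_injective _ (by intro x y h; simpa using h)]
    simp
  set good₁ : Finset (ℕ × ℕ) → Prop := fun B => ∀ i ∈ Finset.range l.length, ∃ c ∈ B, c.1 = i + 1
    with hgood₁
  set t : Finset (Finset (ℕ × ℕ) × Finset (ℕ × ℕ)) :=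
    (T₀.powerset ×ˢ T₁.powerset).filter
      (fun AB => AB.1.Nonempty ∧ good₁ AB.2 ∧ AB.1.card + AB.2.card = r) with ht
  -- Step A
  have stepA : gbc (a :: l) r = t.card := by
    rw [gbc, diagram_cons]
    refine Finset.card_bij (fun S _ => (S ∩ T₀, S ∩ T₁)) ?_ ?_ ?_
    · intro S hS
      simp only [Finset.mem_filter, Finset.mem_powersetCard] at hS
      obtain ⟨⟨hsub, hcard⟩, hgood⟩ := hS
      have hsplit : (S ∩ T₀) ∪ (S ∩ T₁) = S := by
        rw [← Finset.inter_union_distrib_left]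
        exact Finset.inter_eq_left.2 hsub
      simp only [ht, Finset.mem_filter, Finset.mem_product, Finset.mem_powerset]
      refine ⟨⟨Finset.inter_subset_right, Finset.inter_subset_right⟩, ?_, ?_, ?_⟩
      · obtain ⟨c, hcS, hc1⟩ := hgood 0 (by simp)
        have hcT : c ∈ T₀ ∪ T₁ := hsub hcS
        rcases Finset.mem_union.1 hcT with h | h
        · exact ⟨c, Finset.mem_inter.2 ⟨hcS, h⟩⟩
        · exact absurd hc1 (hmem1 c h)
      · intro i hi
        simp only [Finset.mem_range] at hi
        obtain ⟨c, hcS, hc1⟩ := hgood (i + 1) (by simp; omega)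
        have hcT : c ∈ T₀ ∪ T₁ := hsub hcS
        rcases Finset.mem_union.1 hcT with h | h
        · exact absurd (hmem0 c h) (by omega)
        · exact ⟨c, Finset.mem_inter.2 ⟨hcS, h⟩, hc1⟩
      · rw [← Finset.card_union_of_disjoint
          (hdisj.mono Finset.inter_subset_right Finset.inter_subset_right), hsplit, hcard]
    · intro S1 h1 S2 h2 heq
      simp only [Finset.mem_filter, Finset.mem_powersetCard] at h1 h2
      have e1 : (S1 ∩ T₀) ∪ (S1 ∩ T₁) = S1 := by
        rw [← Finset.inter_union_distrib_left]; exact Finset.inter_eq_left.2 h1.1.1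
      have e2 : (S2 ∩ T₀) ∪ (S2 ∩ T₁) = S2 := by
        rw [← Finset.inter_union_distrib_left]; exact Finset.inter_eq_left.2 h2.1.1
      rw [← e1, ← e2]
      simp only [Prod.mk.injEq] at heq
      rw [heq.1, heq.2]
    · rintro ⟨A, B⟩ hAB
      simp only [ht, Finset.mem_filter, Finset.mem_product, Finset.mem_powerset] at hAB
      obtain ⟨⟨hA, hB⟩, hAne, hBgood, hcard⟩ := hAB
      have hABdisj : Disjoint A B := hdisj.mono hA hB
      refine ⟨A ∪ B, ?_, ?_⟩
      · simp only [Finset.mem_filter, Finset.mem_powersetCard]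
        refine ⟨⟨Finset.union_subset_union hA hB, by
          rw [Finset.card_union_of_disjoint hABdisj, hcard]⟩, ?_⟩
        intro i hi
        simp only [List.length_cons, Finset.mem_range] at hi
        cases i with
        | zero =>
            obtain ⟨c, hc⟩ := hAne
            exact ⟨c, Finset.mem_union_left _ hc, hmem0 c (hA hc)⟩
        | succ k =>
            obtain ⟨c, hcB, hc1⟩ := hBgood k (by simp; omega)
            exact ⟨c, Finset.mem_union_right _ hcB, hc1⟩
      · have hA0 : A ∩ T₀ = A := Finset.inter_eq_left.2 hA
        have hB0 : B ∩ T₀ = ∅ := Finset.disjoint_iff_inter_eq_empty.1 (hdisj.symm.mono hB le_rfl)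
        have hA1 : A ∩ T₁ = ∅ := Finset.disjoint_iff_inter_eq_empty.1 (hdisj.mono hA le_rfl)
        have hB1 : B ∩ T₁ = B := Finset.inter_eq_left.2 hB
        rw [Prod.mk.injEq]
        constructor
        · rw [Finset.union_inter_distrib_right, hA0, hB0, Finset.union_empty]
        · rw [Finset.union_inter_distrib_right, hA1, hB1, Finset.empty_union]
  -- Step B: fiberwise count
  have stepB : t.card = ∑ j ∈ Finset.range (r + 1),
      (T₀.powerset.filter (fun A => A.Nonempty ∧ A.card = j)).card *
      (T₁.powerset.filter (fun B => good₁ B ∧ B.card = r - j)).card := by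
    rw [Finset.card_eq_sum_card_fiberwise (f := fun AB => AB.1.card) (t := Finset.range (r + 1))
      (by intro AB hAB
          simp only [Finset.mem_coe, ht, Finset.mem_filter] at hAB
          simp only [Finset.mem_coe, Finset.mem_range]; omega)]
    refine Finset.sum_congr rfl fun j hj => ?_
    simp only [Finset.mem_range] at hj
    have : (t.filter fun AB => AB.1.card = j) =
        (T₀.powerset.filter (fun A => A.Nonempty ∧ A.card = j)) ×ˢ
        (T₁.powerset.filter (fun B => good₁ B ∧ B.card = r - j)) := by
      ext ⟨A, B⟩
      simp only [ht, Finset.mem_filter, Finset.mem_product, Finset.mem_powerset]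
      constructor
      · rintro ⟨⟨⟨hA, hB⟩, hne, hg, hc⟩, hcA⟩
        exact ⟨⟨hA, hne, hcA⟩, hB, hg, by omega⟩
      · rintro ⟨⟨hA, hne, hcA⟩, hB, hg, hcB⟩
        exact ⟨⟨⟨hA, hB⟩, hne, hg, by omega⟩, hcA⟩
    rw [this, Finset.card_product]
  -- Step C
  have stepC : ∀ j, (T₀.powerset.filter (fun A => A.Nonempty ∧ A.card = j)).card =
      if j = 0 then 0 else a.choose j := by
    intro j
    rcases Nat.eq_zero_or_pos j with h | h
    · subst h
      rw [if_pos rfl, Finset.card_eq_zero, Finset.filter_eq_empty_iff]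
      rintro A -
      rintro ⟨hne, hc⟩
      rw [Finset.card_eq_zero] at hc
      exact hne.ne_empty hc
    · rw [if_neg (by omega)]
      have : (T₀.powerset.filter (fun A => A.Nonempty ∧ A.card = j)) = T₀.powersetCard j := by
        ext A
        simp only [Finset.mem_filter, Finset.mem_powerset, Finset.mem_powersetCard]
        constructor
        · rintro ⟨h1, _, h3⟩; exact ⟨h1, h3⟩
        · rintro ⟨h1, h2⟩
          refine ⟨h1, ?_, h2⟩
          rw [← Finset.card_pos, h2]; omega
      rw [this, Finset.card_powersetCard, hT0card]
  -- Step D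
  have stepD : ∀ k, (T₁.powerset.filter (fun B => good₁ B ∧ B.card = k)).card = gbc l k := by
    intro k
    rw [gbc]
    refine (Finset.card_bij (fun S _ => S.image e) ?_ ?_ ?_).symm
    · intro S hS
      simp only [Finset.mem_filter, Finset.mem_powersetCard] at hS
      obtain ⟨⟨hsub, hcard⟩, hgood⟩ := hS
      simp only [Finset.mem_filter, Finset.mem_powerset]
      refine ⟨by rw [hT1]; exact Finset.image_subset_image hsub, ?_, ?_⟩
      · intro i hi
        obtain ⟨c, hcS, hc1⟩ := hgood i hi
        exact ⟨e c, Finset.mem_image_of_mem _ hcS, by simp [he, hc1]⟩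
      · rw [Finset.card_image_of_injective _ einj, hcard]
    · intro S1 h1 S2 h2 heq
      exact Finset.image_injective einj heq
    · intro B hB
      simp only [Finset.mem_filter, Finset.mem_powerset] at hB
      obtain ⟨hsub, hgood, hcard⟩ := hB
      rw [hT1] at hsub
      obtain ⟨S, hS, rfl⟩ := Finset.subset_image_iff.1 hsub
      refine ⟨S, ?_, rfl⟩
      simp only [Finset.mem_filter, Finset.mem_powersetCard]
      refine ⟨⟨hS, by rw [← Finset.card_image_of_injective S einj, hcard]⟩, ?_⟩
      intro i hi
      obtain ⟨c, hcB, hc1⟩ := hgood i hi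
      obtain ⟨d, hdS, rfl⟩ := Finset.mem_image.1 hcB
      exact ⟨d, hdS, by simp [he] at hc1; omega⟩
  -- assemble
  rw [stepA, stepB]
  have hrange : Finset.range (r + 1) = insert 0 (Finset.Icc 1 r) := by
    ext x; simp [Finset.mem_Icc]; omega
  rw [hrange, Finset.sum_insert (by simp)]
  rw [stepC 0, if_pos rfl, Nat.zero_mul, Nat.zero_add]
  refine Finset.sum_congr rfl fun j hj => ?_
  simp only [Finset.mem_Icc] at hj
  rw [stepC j, if_neg (by omega), stepD]

noncomputable def F (s : Multiset ℕ) (r : ℕ) : ℚ :=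
  ((s.map fun a => ((1 + Polynomial.X) ^ a - 1 : Polynomial ℚ)).prod).coeff r

lemma F_zero (r : ℕ) : F 0 r = if r = 0 then 1 else 0 := by
  simp [F, Polynomial.coeff_one]

lemma F_cons (a : ℕ) (s : Multiset ℕ) (r : ℕ) :
    F (a ::ₘ s) r = ∑ j ∈ Finset.Icc 1 r, (a.choose j : ℚ) * F s (r - j) := by
  unfold F
  rw [Multiset.map_cons, Multiset.prod_cons, Polynomial.coeff_mul,
    Finset.Nat.sum_antidiagonal_eq_sum_range_succ_mk]
  have hco : ∀ j : ℕ, ((1 + Polynomial.X : Polynomial ℚ) ^ a - 1).coeff j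
      = (a.choose j : ℚ) - if j = 0 then 1 else 0 := by
    intro j
    rw [Polynomial.coeff_sub, Polynomial.coeff_one_add_X_pow, Polynomial.coeff_one]
  have hrange : Finset.range (r + 1) = insert 0 (Finset.Icc 1 r) := by
    ext x; simp [Finset.mem_Icc]; omega
  rw [hrange, Finset.sum_insert (by simp)]
  rw [hco 0, if_pos rfl]
  simp only [Nat.choose_zero_right, Nat.cast_one, sub_self, zero_mul, zero_add]
  refine Finset.sum_congr rfl fun j hj => ?_
  simp only [Finset.mem_Icc] at hj
  rw [hco j, if_neg (by omega), sub_zero]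

lemma gbc_eq_F (l : List ℕ) (r : ℕ) : (gbc l r : ℚ) = F (↑l) r := by
  induction l generalizing r with
  | nil => rw [gbc_nil]; simp only [Multiset.coe_nil, F_zero]; split <;> simp
  | cons a l ih =>
      rw [gbc_cons, ← Multiset.cons_coe, F_cons]
      push_cast
      exact Finset.sum_congr rfl fun j _ => by rw [ih]

def zM (s : Multiset ℕ) : ℕ :=
  ∏ i ∈ s.toFinset, i ^ s.count i * (s.count i).factorial

lemma zM_cons (a : ℕ) (s : Multiset ℕ) :
    zM (a ::ₘ s) = a * (s.count a + 1) * zM s := by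
  classical
  unfold zM
  rw [Multiset.toFinset_cons]
  by_cases h : a ∈ s.toFinset
  · rw [Finset.insert_eq_self.2 h, ← Finset.mul_prod_erase _ _ h, ← Finset.mul_prod_erase _ _ h,
      Finset.prod_congr rfl (fun i hi =>
        by rw [Multiset.count_cons_of_ne (Finset.ne_of_mem_erase hi)]),
      Multiset.count_cons_self, pow_succ, Nat.factorial_succ]
    ring
  · rw [Finset.prod_insert h]
    have hc0 : s.count a = 0 := by
      rw [Multiset.count_eq_zero]
      exact fun hm => h (Multiset.mem_toFinset.2 hm)
    rw [Multiset.count_cons_self, hc0,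
      Finset.prod_congr rfl (fun i hi =>
        by rw [Multiset.count_cons_of_ne (by rintro rfl; exact h hi)])]
    simp [Nat.factorial]

lemma zM_pos (s : Multiset ℕ) (hs : ∀ i ∈ s, 0 < i) : 0 < zM s := by
  unfold zM
  refine Finset.prod_pos fun i hi => ?_
  have : 0 < i := hs i (Multiset.mem_toFinset.1 hi)
  exact Nat.mul_pos (Nat.pow_pos this) (Nat.factorial_pos _)

noncomputable def Phi (m q s : ℕ) : ℚ :=
  ∑ μ ∈ Finset.univ.filter (fun μ : m.Partition => μ.parts.card = q), F μ.parts s / zM μ.parts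

lemma sum_part (m i q : ℕ) (hi1 : 1 ≤ i) (him : i ≤ m) (g : Multiset ℕ → ℚ) :
    ∑ μ ∈ Finset.univ.filter (fun μ : m.Partition => μ.parts.card = q + 1),
      (μ.parts.count i : ℚ) * g μ.parts
    = ∑ ν ∈ Finset.univ.filter (fun ν : (m - i).Partition => ν.parts.card = q),
      ((ν.parts.count i : ℚ) + 1) * g (i ::ₘ ν.parts) := by
  classical
  rw [← Finset.sum_subset
    (show Finset.univ.filter
        (fun μ : m.Partition => μ.parts.card = q + 1 ∧ i ∈ μ.parts) ⊆ _ by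
      intro μ hμ
      simp only [Finset.mem_filter] at hμ ⊢
      exact ⟨hμ.1, hμ.2.1⟩)
    (by
      intro μ hμ hμ'
      simp only [Finset.mem_filter, Finset.mem_univ, true_and] at hμ hμ'
      have : i ∉ μ.parts := fun hmem => hμ' ⟨hμ, hmem⟩
      rw [Multiset.count_eq_zero.2 this]
      simp)]
  refine Finset.sum_bij'
    (fun μ hμ => ⟨μ.parts.erase i, ?_, ?_⟩ :
      ∀ μ ∈ Finset.univ.filter
        (fun μ : m.Partition => μ.parts.card = q + 1 ∧ i ∈ μ.parts), (m - i).Partition)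
    (fun ν hν => ⟨i ::ₘ ν.parts, ?_, ?_⟩) ?_ ?_ ?_ ?_ ?_
  · exact fun hj => μ.parts_pos (Multiset.mem_of_mem_erase hj)
  · simp only [Finset.mem_filter, Finset.mem_univ, true_and] at hμ
    have hc : i ::ₘ μ.parts.erase i = μ.parts := Multiset.cons_erase hμ.2
    have := μ.parts_sum
    rw [← hc, Multiset.sum_cons] at this
    omega
  · intro x hx
    rcases Multiset.mem_cons.1 hx with rfl | hx'
    · omega
    · exact ν.parts_pos hx'
  · rw [Multiset.sum_cons, ν.parts_sum]; omega
  · intro μ hμ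
    simp only [Finset.mem_filter, Finset.mem_univ, true_and] at hμ ⊢
    have hc : i ::ₘ μ.parts.erase i = μ.parts := Multiset.cons_erase hμ.2
    have := congrArg Multiset.card hc
    rw [Multiset.card_cons] at this
    omega
  · intro ν hν
    simp only [Finset.mem_filter, Finset.mem_univ, true_and] at hν ⊢
    constructor
    · simp [Multiset.card_cons, hν]
    · exact Multiset.mem_cons_self _ _
  · intro μ hμ
    simp only [Finset.mem_filter, Finset.mem_univ, true_and] at hμ
    exact Nat.Partition.ext (Multiset.cons_erase hμ.2)
  · intro ν hν
    exact Nat.Partition.ext (Multiset.erase_cons_head _ _)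
  · intro μ hμ
    simp only [Finset.mem_filter, Finset.mem_univ, true_and] at hμ
    have hc : i ::ₘ μ.parts.erase i = μ.parts := Multiset.cons_erase hμ.2
    have hcount : μ.parts.count i = (μ.parts.erase i).count i + 1 := by
      rw [← hc, Multiset.erase_cons_head, Multiset.count_cons_self]
    rw [hcount, show g μ.parts = g (i ::ₘ μ.parts.erase i) from by rw [hc]]
    push_cast
    ring

lemma parts_mem_Icc {m : ℕ} (μ : m.Partition) : ∀ i ∈ μ.parts, i ∈ Finset.Icc 1 m := by
  intro i hi
  simp only [Finset.mem_Icc]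
  exact ⟨μ.parts_pos hi, (Multiset.le_sum_of_mem hi).trans_eq μ.parts_sum⟩

lemma map_sum_eq {m : ℕ} (μ : m.Partition) (h : ℕ → ℚ) :
    (μ.parts.map h).sum = ∑ i ∈ Finset.Icc 1 m, (μ.parts.count i : ℚ) * h i := by
  rw [Finset.sum_multiset_map_count]
  rw [Finset.sum_subset (fun i hi => parts_mem_Icc μ i (Multiset.mem_toFinset.1 hi))
    (fun i _ hni => by
      rw [Multiset.count_eq_zero.2 (fun hm => hni (Multiset.mem_toFinset.2 hm))]
      simp)]
  exact Finset.sum_congr rfl fun i _ => by rw [nsmul_eq_mul]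

lemma card_eq_sum_count {m : ℕ} (μ : m.Partition) :
    (μ.parts.card : ℚ) = ∑ i ∈ Finset.Icc 1 m, (μ.parts.count i : ℚ) := by
  have h : ∑ i ∈ Finset.Icc 1 m, μ.parts.count i = Multiset.card μ.parts := by
    rw [← Multiset.toFinset_sum_count_eq]
    exact (Finset.sum_subset (fun i hi => parts_mem_Icc μ i (Multiset.mem_toFinset.1 hi))
      (fun i _ hni => Multiset.count_eq_zero.2 (fun hm => hni (Multiset.mem_toFinset.2 hm)))).symm
  rw [← h]
  push_cast
  rfl

lemma sum_count_F (m i q s : ℕ) (hi1 : 1 ≤ i) (him : i ≤ m) :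
    ∑ μ ∈ Finset.univ.filter (fun μ : m.Partition => μ.parts.card = q + 1),
      (μ.parts.count i : ℚ) * (F μ.parts s / zM μ.parts)
    = (1 / i) * ∑ j ∈ Finset.Icc 1 s, (i.choose j : ℚ) * Phi (m - i) q (s - j) := by
  rw [sum_part m i q hi1 him (fun t => F t s / zM t)]
  have key : ∀ ν ∈ Finset.univ.filter (fun ν : (m - i).Partition => ν.parts.card = q),
      ((ν.parts.count i : ℚ) + 1) * (F (i ::ₘ ν.parts) s / zM (i ::ₘ ν.parts))
      = (1 / i) * ∑ j ∈ Finset.Icc 1 s, (i.choose j : ℚ) * (F ν.parts (s - j) / zM ν.parts) := by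
    intro ν _
    have hzm : (zM ν.parts : ℚ) ≠ 0 := by
      have := zM_pos ν.parts (fun x hx => ν.parts_pos hx)
      positivity
    have hi0 : (i : ℚ) ≠ 0 := by positivity
    have hc : ((ν.parts.count i : ℚ) + 1) ≠ 0 := by positivity
    rw [zM_cons, F_cons]
    push_cast
    rw [Finset.sum_div, Finset.mul_sum, Finset.mul_sum]
    refine Finset.sum_congr rfl fun j _ => ?_
    field_simp
  rw [Finset.sum_congr rfl key, ← Finset.mul_sum]
  congr 1
  rw [Finset.sum_comm]
  refine Finset.sum_congr rfl fun j _ => ?_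
  rw [Phi, Finset.mul_sum]

lemma Phi_rec (m q s : ℕ) (hm : 1 ≤ m) :
    (q + 1 : ℚ) * Phi m (q + 1) s
    = ∑ i ∈ Finset.Icc 1 m, (1 / i) * ∑ j ∈ Finset.Icc 1 s,
        (i.choose j : ℚ) * Phi (m - i) q (s - j) := by
  rw [Phi, Finset.mul_sum]
  have h1 : ∀ μ ∈ Finset.univ.filter (fun μ : m.Partition => μ.parts.card = q + 1),
      (q + 1 : ℚ) * (F μ.parts s / zM μ.parts)
      = ∑ i ∈ Finset.Icc 1 m, (μ.parts.count i : ℚ) * (F μ.parts s / zM μ.parts) := by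
    intro μ hμ
    rw [← Finset.sum_mul]
    congr 1
    rw [← card_eq_sum_count μ]
    simp only [Finset.mem_filter, Finset.mem_univ, true_and] at hμ
    rw [hμ]
    push_cast
    ring
  rw [Finset.sum_congr rfl h1, Finset.sum_comm]
  exact Finset.sum_congr rfl fun i hi =>
    sum_count_F m i q s (Finset.mem_Icc.1 hi).1 (Finset.mem_Icc.1 hi).2

def stir : ℕ → ℕ → ℕ
  | 0, 0 => 1
  | 0, _ + 1 => 0
  | _ + 1, 0 => 0
  | n + 1, k + 1 => n * stir n (k + 1) + stir n k

lemma stir_zero_right (s : ℕ) : stir s 0 = if s = 0 then 1 else 0 := by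
  cases s <;> simp [stir]

lemma stir_one (s : ℕ) : stir (s + 1) 1 = s.factorial := by
  induction s with
  | zero => simp [stir]
  | succ s ih =>
      show (s + 1) * stir (s + 1) 1 + stir (s + 1) 0 = (s + 1).factorial
      rw [ih, stir_zero_right, if_neg (by omega), Nat.factorial_succ]
      omega

lemma sum_range_choose_eq (n b : ℕ) :
    ∑ k ∈ Finset.range (n + 1), k.choose b = (n + 1).choose (b + 1) := by
  rw [← Nat.sum_Icc_choose n b]
  exact (Finset.sum_subset
    (fun k hk => Finset.mem_range.2 (by simp only [Finset.mem_Icc] at hk; omega))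
    (fun k hk hnk => Nat.choose_eq_zero_of_lt
      (by simp only [Finset.mem_Icc, Finset.mem_range, not_and, not_le] at *; omega))).symm

lemma vand (b : ℕ) : ∀ (N a : ℕ),
    ∑ k ∈ Finset.range (N + 1), k.choose a * (N - k).choose b = (N + 1).choose (a + b + 1) := by
  intro N
  induction N with
  | zero =>
      intro a
      cases a with
      | zero => simpa using (by cases b <;> simp [Nat.choose] : Nat.choose 0 b = Nat.choose 1 (b+1))
      | succ a =>
          rw [Nat.choose_eq_zero_of_lt (show 1 < a + 1 + b + 1 by omega)]
          simp
  | succ N ih =>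
      intro a
      cases a with
      | zero =>
          simp only [Nat.choose_zero_right, one_mul, Nat.zero_add]
          calc ∑ k ∈ Finset.range (N + 2), (N + 1 - k).choose b
              = ∑ k ∈ Finset.range (N + 2), ((N + 2 - 1 - k).choose b) := by
                refine Finset.sum_congr rfl fun k hk => by norm_num
            _ = ∑ k ∈ Finset.range (N + 2), k.choose b := Finset.sum_range_reflect (fun k => k.choose b) (N + 2)
            _ = (N + 2).choose (b + 1) := sum_range_choose_eq _ _
      | succ a =>
          rw [Finset.sum_range_succ']
          rw [Nat.choose_eq_zero_of_lt (show 0 < a + 1 by omega), Nat.zero_mul, Nat.add_zero]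
          have hsum : ∑ k ∈ Finset.range (N + 1), (k + 1).choose (a + 1) * (N + 1 - (k + 1)).choose b
              = ∑ k ∈ Finset.range (N + 1), k.choose a * (N - k).choose b
                + ∑ k ∈ Finset.range (N + 1), k.choose (a + 1) * (N - k).choose b := by
            rw [← Finset.sum_add_distrib]
            refine Finset.sum_congr rfl fun k _ => ?_
            rw [Nat.choose_succ_succ, Nat.succ_sub_succ]
            ring
          rw [hsum, ih a, ih (a + 1)]
          have h2 : a + 1 + b + 1 = (a + b + 1) + 1 := by omega
          rw [h2, Nat.choose_succ_succ (N + 1) (a + b + 1)]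

lemma stir_id : ∀ s q, ∑ j ∈ Finset.range s, s.choose (j + 1) * j.factorial * stir (s - (j + 1)) q
    = (q + 1) * stir s (q + 1) := by
  intro s
  induction s with
  | zero => intro q; cases q <;> simp [stir]
  | succ s ih =>
      intro q
      cases q with
      | zero =>
          rw [Finset.sum_eq_single s
            (fun j hj hne => by
              rw [stir_zero_right, if_neg (by simp only [Finset.mem_range] at hj; omega),
                Nat.mul_zero])
            (fun h => absurd (Finset.mem_range.2 (by omega)) h)]
          rw [Nat.sub_self, stir_zero_right, if_pos rfl, Nat.choose_self, Nat.one_mul,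
            Nat.mul_one, Nat.one_mul, stir_one]
      | succ q =>
          have pascal : ∀ j ∈ Finset.range (s + 1),
              (s + 1).choose (j + 1) * j.factorial * stir (s + 1 - (j + 1)) (q + 1)
              = s.choose j * j.factorial * stir (s - j) (q + 1)
                + s.choose (j + 1) * j.factorial * stir (s - j) (q + 1) := by
            intro j hj
            rw [Nat.choose_succ_succ, Nat.succ_sub_succ]
            ring
          rw [Finset.sum_congr rfl pascal, Finset.sum_add_distrib]
          -- second sum: j = s term vanishes
          have hsecond : ∑ j ∈ Finset.range (s + 1),
              s.choose (j + 1) * j.factorial * stir (s - j) (q + 1)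
              = ∑ j ∈ Finset.range s, s.choose (j + 1) * j.factorial * stir (s - j) (q + 1) := by
            rw [Finset.sum_range_succ, Nat.choose_eq_zero_of_lt (by omega), Nat.zero_mul,
              Nat.zero_mul, Nat.add_zero]
          -- expand stir (s - j) (q+1) for j < s
          have hexp : ∑ j ∈ Finset.range s, s.choose (j + 1) * j.factorial * stir (s - j) (q + 1)
              = ∑ j ∈ Finset.range s, s.choose (j + 1) * j.factorial *
                  ((s - (j + 1)) * stir (s - (j + 1)) (q + 1) + stir (s - (j + 1)) q) := by
            refine Finset.sum_congr rfl fun j hj => ?_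
            simp only [Finset.mem_range] at hj
            have h1 : s - j = (s - (j + 1)) + 1 := by omega
            rw [h1]
            rfl
          -- first sum: split off j = 0
          have hfirst : ∑ j ∈ Finset.range (s + 1),
              s.choose j * j.factorial * stir (s - j) (q + 1)
              = stir s (q + 1) + ∑ j ∈ Finset.range s,
                  s.choose (j + 1) * (j + 1).factorial * stir (s - (j + 1)) (q + 1) := by
            rw [Finset.sum_range_succ']
            simp [Nat.add_comm]
          rw [hsecond, hexp, hfirst]
          have hcomb : ∑ j ∈ Finset.range s,
                s.choose (j + 1) * (j + 1).factorial * stir (s - (j + 1)) (q + 1)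
              + ∑ j ∈ Finset.range s, s.choose (j + 1) * j.factorial *
                  ((s - (j + 1)) * stir (s - (j + 1)) (q + 1) + stir (s - (j + 1)) q)
              = s * ∑ j ∈ Finset.range s,
                  s.choose (j + 1) * j.factorial * stir (s - (j + 1)) (q + 1)
                + ∑ j ∈ Finset.range s,
                  s.choose (j + 1) * j.factorial * stir (s - (j + 1)) q := by
            rw [Finset.mul_sum, ← Finset.sum_add_distrib, ← Finset.sum_add_distrib]
            refine Finset.sum_congr rfl fun j hj => ?_
            simp only [Finset.mem_range] at hj
            obtain ⟨a, rfl⟩ : ∃ a, s = j + 1 + a := ⟨s - (j + 1), by omega⟩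
            simp only [Nat.add_sub_cancel_left, Nat.factorial_succ]
            ring
          rw [Nat.add_assoc, hcomb, ih (q + 1), ih q]
          show _ = (q + 2) * ((s) * stir s (q + 2) + stir s (q + 1))
          ring

def bin (a b : ℤ) : ℚ := if 0 ≤ b ∧ b ≤ a then ((a.toNat).choose b.toNat : ℚ) else 0

def binC (a b : ℤ) : ℚ := if a = -1 ∧ b = -1 then 1 else bin a b

lemma binC_nat (a b : ℕ) : binC (a : ℤ) (b : ℤ) = (a.choose b : ℚ) := by
  unfold binC bin
  rw [if_neg (by omega)]
  by_cases h : (b : ℤ) ≤ (a : ℤ)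
  · rw [if_pos ⟨by omega, h⟩, Int.toNat_natCast, Int.toNat_natCast]
  · rw [if_neg (by omega), Nat.choose_eq_zero_of_lt (by omega), Nat.cast_zero]

lemma binC_neg_one_right (a : ℤ) : binC a (-1) = if a = -1 then 1 else 0 := by
  unfold binC bin
  by_cases h : a = -1
  · rw [if_pos ⟨h, rfl⟩, if_pos h]
  · rw [if_neg (by tauto), if_neg (by omega), if_neg h]

lemma stir_idQ (s q : ℕ) :
    ∑ j ∈ Finset.Icc 1 s, (stir (s - j) q : ℚ) / ((s - j).factorial * j)
    = (q + 1) * stir s (q + 1) / s.factorial := by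
  have hIcc : Finset.Icc 1 s = Finset.Ico 1 (s + 1) := by rw [Finset.Ico_add_one_right_eq_Icc]
  rw [hIcc, Finset.sum_Ico_eq_sum_range]
  simp only [Nat.add_sub_cancel]
  rw [eq_div_iff (show (s.factorial : ℚ) ≠ 0 by positivity), Finset.sum_mul]
  have := stir_id s q
  calc ∑ k ∈ Finset.range s, (stir (s - (1 + k)) q : ℚ) / ((s - (1 + k)).factorial * ((1 + k : ℕ) : ℚ))
        * s.factorial
      = ∑ k ∈ Finset.range s, (s.choose (k + 1) * k.factorial * stir (s - (k + 1)) q : ℚ) := by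
        refine Finset.sum_congr rfl fun k hk => ?_
        simp only [Finset.mem_range] at hk
        have hle : k + 1 ≤ s := by omega
        have hfac := Nat.choose_mul_factorial_mul_factorial hle
        have h1k : 1 + k = k + 1 := by omega
        rw [h1k, ← hfac]
        have h2 : ((k + 1).factorial : ℚ) = (k + 1) * k.factorial := by
          rw [Nat.factorial_succ]; push_cast; ring
        push_cast [h2]
        have hne1 : ((s - (k + 1)).factorial : ℚ) ≠ 0 := by positivity
        have hne2 : ((k : ℚ) + 1) ≠ 0 := by positivity
        field_simp
    _ = ((q + 1) * stir s (q + 1) : ℚ) := by exact_mod_cast this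

lemma innerSumAux (m s j : ℕ) (hm : 1 ≤ m) (hj1 : 1 ≤ j) (hjs : j ≤ s) :
    ∑ i ∈ Finset.Icc 1 m, (1 / i : ℚ) * (i.choose j) * binC ((m : ℤ) - i - 1) ((s : ℤ) - j - 1)
    = ((m - 1).choose (s - 1) : ℚ) / j := by
  have hstep : ∀ i ∈ Finset.Icc 1 m, (1 / i : ℚ) * (i.choose j) * binC ((m:ℤ) - i - 1) ((s:ℤ) - j - 1)
      = (1 / j) * (((i - 1).choose (j - 1) : ℚ) * binC ((m:ℤ) - i - 1) ((s:ℤ) - j - 1)) := by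
    intro i hi
    simp only [Finset.mem_Icc] at hi
    obtain ⟨i', rfl⟩ : ∃ i', i = i' + 1 := ⟨i - 1, by omega⟩
    obtain ⟨j', rfl⟩ : ∃ j', j = j' + 1 := ⟨j - 1, by omega⟩
    simp only [Nat.add_sub_cancel]
    generalize binC ((m : ℤ) - ((i' + 1 : ℕ) : ℤ) - 1) ((s : ℤ) - ((j' + 1 : ℕ) : ℤ) - 1) = B
    have hkeyQ : ((i' : ℚ) + 1) * (i'.choose j' : ℚ)
        = ((i' + 1).choose (j' + 1) : ℚ) * ((j' : ℚ) + 1) := by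
      exact_mod_cast Nat.add_one_mul_choose_eq i' j'
    have h1 : ((i' : ℚ) + 1) ≠ 0 := by positivity
    have h2 : ((j' : ℚ) + 1) ≠ 0 := by positivity
    push_cast
    field_simp
    linear_combination -(B * hkeyQ)
  rw [Finset.sum_congr rfl hstep, ← Finset.mul_sum]
  have hmain : ∑ i ∈ Finset.Icc 1 m,
      (((i - 1).choose (j - 1) : ℕ) : ℚ) * binC ((m : ℤ) - i - 1) ((s : ℤ) - j - 1)
      = (((m - 1).choose (s - 1) : ℕ) : ℚ) := by
    rcases eq_or_lt_of_le hjs with rfl | hjlt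
    · -- j = s
      rw [Finset.sum_eq_single m
        (fun i hi hne => by
          simp only [Finset.mem_Icc] at hi
          have ha : (m : ℤ) - i - 1 = ((m - i - 1 : ℕ) : ℤ) := by omega
          have hb : (j : ℤ) - j - 1 = -1 := by ring
          rw [hb, ha, binC_neg_one_right, if_neg (by omega), mul_zero])
        (fun h => absurd (Finset.mem_Icc.2 ⟨hm, le_rfl⟩) h)]
      have ha : (m : ℤ) - m - 1 = -1 := by ring
      have hb : (j : ℤ) - j - 1 = -1 := by ring
      rw [ha, hb, binC_neg_one_right, if_pos rfl, mul_one]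
    · -- j < s
      have hsplit : Finset.Icc 1 m = insert m (Finset.Icc 1 (m - 1)) := by
        ext x; simp only [Finset.mem_insert, Finset.mem_Icc]; omega
      rw [hsplit, Finset.sum_insert (by simp only [Finset.mem_Icc]; omega)]
      have hmterm : (((m - 1).choose (j - 1) : ℕ) : ℚ)
          * binC ((m:ℤ) - m - 1) ((s:ℤ) - j - 1) = 0 := by
        have h1 : (m : ℤ) - m - 1 = -1 := by ring
        rw [h1]
        unfold binC bin
        rw [if_neg (by omega), if_neg (by omega), mul_zero]
      rw [hmterm, zero_add]
      have hterm : ∀ i ∈ Finset.Icc 1 (m - 1),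
          (((i - 1).choose (j - 1) : ℕ) : ℚ) * binC ((m:ℤ) - i - 1) ((s:ℤ) - j - 1)
          = (((i - 1).choose (j - 1) * (m - 1 - i).choose (s - j - 1) : ℕ) : ℚ) := by
        intro i hi
        simp only [Finset.mem_Icc] at hi
        have ha : (m : ℤ) - i - 1 = ((m - 1 - i : ℕ) : ℤ) := by omega
        have hb : (s : ℤ) - j - 1 = ((s - j - 1 : ℕ) : ℤ) := by omega
        rw [ha, hb, binC_nat]
        push_cast
        ring
      have hnat : ∑ i ∈ Finset.Icc 1 (m - 1), (i - 1).choose (j - 1) *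
          (m - 1 - i).choose (s - j - 1) = (m - 1).choose (s - 1) := by
        rcases Nat.lt_or_ge m 2 with hm2 | hm2
        · have hm1 : m = 1 := by omega
          subst hm1
          rw [show Finset.Icc 1 (1 - 1) = (∅ : Finset ℕ) by simp, Finset.sum_empty,
            Nat.choose_eq_zero_of_lt (by omega)]
        · have hIcc : Finset.Icc 1 (m - 1) = Finset.Ico 1 m := by
            ext x; simp only [Finset.mem_Icc, Finset.mem_Ico]; omega
          rw [hIcc, Finset.sum_Ico_eq_sum_range]
          have hcongr : ∀ k ∈ Finset.range (m - 1),
              (1 + k - 1).choose (j - 1) * (m - 1 - (1 + k)).choose (s - j - 1)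
              = k.choose (j - 1) * (m - 2 - k).choose (s - j - 1) := by
            intro k hk
            rw [show 1 + k - 1 = k by omega, show m - 1 - (1 + k) = m - 2 - k by omega]
          rw [Finset.sum_congr rfl hcongr]
          have hv := vand (s - j - 1) (m - 2) (j - 1)
          have hr : m - 2 + 1 = m - 1 := by omega
          rw [hr] at hv
          rw [hv]
          congr 1
          omega
      rw [Finset.sum_congr rfl hterm, ← Nat.cast_sum, hnat]
  rw [hmain]
  ring

lemma parts_zero (μ : (0 : ℕ).Partition) : μ.parts = 0 := by
  by_contra h
  obtain ⟨x, hx⟩ := Multiset.exists_mem_of_ne_zero h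
  have h1 := μ.parts_pos hx
  have h2 := Multiset.le_sum_of_mem hx
  rw [μ.parts_sum] at h2
  omega

lemma PhiL : ∀ q m s : ℕ,
    Phi m q s = (stir s q : ℚ) / s.factorial * binC ((m : ℤ) - 1) ((s : ℤ) - 1) := by
  intro q
  induction q with
  | zero =>
      intro m s
      rcases Nat.eq_zero_or_pos m with rfl | hm
      · have huniv : (Finset.univ.filter (fun μ : (0 : ℕ).Partition => μ.parts.card = 0))
            = {⟨0, by simp, rfl⟩} := by
          ext μ
          simp only [Finset.mem_filter, Finset.mem_univ, true_and, Finset.mem_singleton]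
          constructor
          · intro _; exact Nat.Partition.ext (parts_zero μ)
          · intro h; rw [h]; rfl
        rw [Phi, huniv, Finset.sum_singleton]
        show F 0 s / (zM 0 : ℚ) = _
        rw [F_zero, show zM 0 = 1 from rfl]
        cases s with
        | zero =>
            rw [if_pos rfl]
            show (1 : ℚ) / 1 = _
            rw [show ((0 : ℕ) : ℤ) - 1 = -1 by ring, show stir 0 0 = 1 from rfl]
            rw [show binC (-1) (-1) = 1 from by unfold binC; rw [if_pos ⟨rfl, rfl⟩]]
            norm_num
        | succ s =>
            rw [if_neg (by omega), show stir (s + 1) 0 = 0 from by simp [stir_zero_right]]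
            simp
      · have hempty : (Finset.univ.filter (fun μ : m.Partition => μ.parts.card = 0)) = ∅ := by
          rw [Finset.filter_eq_empty_iff]
          intro μ _
          intro hc
          have h0 : μ.parts = 0 := Multiset.card_eq_zero.1 hc
          have hs := μ.parts_sum
          rw [h0] at hs
          simp at hs
          omega
        rw [Phi, hempty, Finset.sum_empty]
        cases s with
        | zero =>
            rw [show ((0 : ℕ) : ℤ) - 1 = -1 by ring, binC_neg_one_right, if_neg (by omega)]
            ring
        | succ s =>
            rw [show stir (s + 1) 0 = 0 from by simp [stir_zero_right]]
            simp
  | succ q ih =>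
      intro m s
      rcases Nat.eq_zero_or_pos m with rfl | hm
      · have hempty : (Finset.univ.filter
            (fun μ : (0 : ℕ).Partition => μ.parts.card = q + 1)) = ∅ := by
          rw [Finset.filter_eq_empty_iff]
          intro μ _
          rw [parts_zero μ]
          simp
        rw [Phi, hempty, Finset.sum_empty]
        cases s with
        | zero => rw [show stir 0 (q + 1) = 0 from rfl]; simp
        | succ s =>
            rw [show ((0 : ℕ) : ℤ) - 1 = -1 by ring,
              show ((s + 1 : ℕ) : ℤ) - 1 = ((s : ℕ) : ℤ) by push_cast; ring]
            rw [show binC (-1) ((s : ℕ) : ℤ) = 0 from by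
              unfold binC bin; rw [if_neg (by omega), if_neg (by omega)]]
            ring
      · cases s with
        | zero =>
            have h := Phi_rec m q 0 hm
            rw [show Finset.Icc 1 0 = (∅ : Finset ℕ) from by simp] at h
            simp only [Finset.sum_empty, mul_zero, Finset.sum_const_zero] at h
            have hq1 : ((q : ℚ) + 1) ≠ 0 := by positivity
            have hPhi : Phi m (q + 1) 0 = 0 := by
              rcases mul_eq_zero.1 h with h' | h'
              · exact absurd h' hq1
              · exact h'
            rw [hPhi, show stir 0 (q + 1) = 0 from rfl]
            simp
        | succ s' =>
            have h := Phi_rec m q (s' + 1) hm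
            have hstep1 : ∀ i ∈ Finset.Icc 1 m, (1 / (i : ℚ)) *
                ∑ j ∈ Finset.Icc 1 (s' + 1), (i.choose j : ℚ) * Phi (m - i) q (s' + 1 - j)
                = ∑ j ∈ Finset.Icc 1 (s' + 1), (stir (s' + 1 - j) q : ℚ) /
                    (s' + 1 - j).factorial *
                    ((1 / (i : ℚ)) * (i.choose j) *
                      binC ((m : ℤ) - i - 1) (((s' + 1 : ℕ) : ℤ) - j - 1)) := by
              intro i hi
              rw [Finset.mul_sum]
              refine Finset.sum_congr rfl fun j hj => ?_
              simp only [Finset.mem_Icc] at hi hj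
              rw [ih (m - i) (s' + 1 - j)]
              rw [show (((m - i : ℕ) : ℤ) - 1) = (m : ℤ) - i - 1 by omega,
                show (((s' + 1 - j : ℕ) : ℤ) - 1) = ((s' + 1 : ℕ) : ℤ) - j - 1 by omega]
              ring
            rw [Finset.sum_congr rfl hstep1, Finset.sum_comm] at h
            have hstep2 : ∀ j ∈ Finset.Icc 1 (s' + 1),
                ∑ i ∈ Finset.Icc 1 m, (stir (s' + 1 - j) q : ℚ) / (s' + 1 - j).factorial *
                    ((1 / (i : ℚ)) * (i.choose j) *
                      binC ((m : ℤ) - i - 1) (((s' + 1 : ℕ) : ℤ) - j - 1))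
                = ((m - 1).choose s' : ℚ) *
                    ((stir (s' + 1 - j) q : ℚ) / ((s' + 1 - j).factorial * j)) := by
              intro j hj
              simp only [Finset.mem_Icc] at hj
              rw [← Finset.mul_sum, innerSumAux m (s' + 1) j hm hj.1 hj.2,
                show (s' + 1) - 1 = s' by omega]
              ring
            rw [Finset.sum_congr rfl hstep2, ← Finset.mul_sum, stir_idQ (s' + 1) q] at h
            have hq1 : ((q : ℚ) + 1) ≠ 0 := by positivity
            have hbin : binC ((m : ℤ) - 1) (((s' + 1 : ℕ) : ℤ) - 1)
                = ((m - 1).choose s' : ℚ) := by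
              rw [show (m : ℤ) - 1 = ((m - 1 : ℕ) : ℤ) by omega,
                show ((s' + 1 : ℕ) : ℤ) - 1 = ((s' : ℕ) : ℤ) by push_cast; ring,
                binC_nat]
            apply mul_left_cancel₀ hq1
            rw [show ((q : ℚ) + 1) = (((q : ℕ) : ℚ) + 1) from rfl] at h ⊢
            rw [h, hbin]
            push_cast
            ring

def gbcZ (l : List ℕ) (r : ℤ) : ℕ := if 0 ≤ r then gbc l r.toNat else 0

def gbcP {n : ℕ} (μ : n.Partition) (r : ℕ) : ℕ :=
  gbc (μ.parts.sort (· ≥ ·)) r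

def zMu {n : ℕ} (μ : n.Partition) : ℕ :=
  ∏ i ∈ μ.parts.toFinset, i ^ μ.parts.count i * (μ.parts.count i).factorial

def asc (a s : ℕ) : ℕ := ∏ t ∈ Finset.range s, (a + t)

def cb (x : ℚ) (r : ℕ) : ℚ := (∏ t ∈ Finset.range r, (x - t)) / r.factorial

def hp (x : ℚ) (k : ℕ) : ℚ := (∏ t ∈ Finset.range k, (x + t)) / k.factorial

lemma gbcP_eq {n : ℕ} (μ : n.Partition) (r : ℕ) : (gbcP μ r : ℚ) = F μ.parts r := by
  rw [gbcP, gbc_eq_F, Multiset.sort_eq]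

lemma zMu_eq {n : ℕ} (μ : n.Partition) : zMu μ = zM μ.parts := rfl

theorem stmt16 (n r p : ℕ) (hn : 1 ≤ n) (hr : 1 ≤ r) (hp1 : 1 ≤ p) (hpr : p ≤ r)
    (z : ℚ) :
    ∑ μ ∈ Finset.univ.filter (fun μ : n.Partition => μ.parts.card = p),
        (gbcP μ r : ℚ) / zMu μ * (μ.parts.map fun a => z ^ (a - 1)).sum
      = ∑ j ∈ Finset.Icc 1 r, ∑ i ∈ Finset.Icc j (n + j - r),
          (stir (r - j) (p - 1) : ℚ) / (i * (r - j).factorial) * (i.choose j : ℚ)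
            * binC ((n : ℤ) - i - 1) ((r : ℤ) - j - 1) * z ^ (i - 1) := by
  classical
  obtain ⟨p', rfl⟩ : ∃ p', p = p' + 1 := ⟨p - 1, by omega⟩
  have h1 : ∀ μ ∈ Finset.univ.filter (fun μ : n.Partition => μ.parts.card = p' + 1),
      (gbcP μ r : ℚ) / zMu μ * (μ.parts.map fun a => z ^ (a - 1)).sum
      = ∑ i ∈ Finset.Icc 1 n,
          (μ.parts.count i : ℚ) * (F μ.parts r / zM μ.parts) * z ^ (i - 1) := by
    intro μ _
    rw [map_sum_eq μ (fun a => z ^ (a - 1)), Finset.mul_sum]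
    refine Finset.sum_congr rfl fun i _ => ?_
    rw [gbcP_eq, zMu_eq]
    ring
  rw [Finset.sum_congr rfl h1, Finset.sum_comm]
  have h2 : ∀ i ∈ Finset.Icc 1 n,
      ∑ μ ∈ Finset.univ.filter (fun μ : n.Partition => μ.parts.card = p' + 1),
        (μ.parts.count i : ℚ) * (F μ.parts r / zM μ.parts) * z ^ (i - 1)
      = ∑ j ∈ Finset.Icc 1 r,
          (stir (r - j) p' : ℚ) / (i * (r - j).factorial) * (i.choose j : ℚ)
            * binC ((n : ℤ) - i - 1) ((r : ℤ) - j - 1) * z ^ (i - 1) := by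
    intro i hi
    simp only [Finset.mem_Icc] at hi
    rw [← Finset.sum_mul, sum_count_F n i p' r hi.1 hi.2, Finset.mul_sum, Finset.sum_mul]
    refine Finset.sum_congr rfl fun j hj => ?_
    simp only [Finset.mem_Icc] at hj
    rw [PhiL p' (n - i) (r - j)]
    rw [show (((n - i : ℕ) : ℤ) - 1) = (n : ℤ) - i - 1 by omega,
      show (((r - j : ℕ) : ℤ) - 1) = (r : ℤ) - j - 1 by omega]
    ring
  rw [Finset.sum_congr rfl h2, Finset.sum_comm]
  refine Finset.sum_congr rfl fun j hj => ?_
  simp only [Finset.mem_Icc] at hj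
  refine (Finset.sum_subset (fun i hi => ?_) (fun i hi hni => ?_)).symm
  · simp only [Finset.mem_Icc] at hi ⊢
    omega
  · simp only [Finset.mem_Icc, not_and, not_le] at hi hni
    rcases Nat.lt_or_ge i j with hij | hij
    · rw [Nat.choose_eq_zero_of_lt hij]
      push_cast
      ring
    · have hb : binC ((n : ℤ) - i - 1) ((r : ℤ) - j - 1) = 0 := by
        unfold binC bin
        rw [if_neg (by omega), if_neg (by omega)]
      rw [hb]
      ring
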